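/- Define Q : [0,1] × [0,2] → ℝ as follows. For 0 ≤ u ≤ 1/5: Q(u,v) = (1-u+2v)/2 if 0 ≤ v ≤ 2u; Q(u,v) = (2+3v)/4 if 2u ≤ v ≤ (1-u)/2; Q(u,v) = (4-2u-v)/4 if (1-u)/2 ≤ v ≤ (1+3u)/2; Q(u,v) = (14-7v)/12 if (1+3u)/2 ≤ v ≤ 2. For 1/5 ≤ u ≤ 1: Q(u,v) = (1-u+2v)/2 if 0 ≤ v ≤ (1-u)/2; Q(u,v) = 1-u if (1-u)/2 ≤ v ≤ 2u; Q(u,v) = (4-2u-v)/4 if 2u ≤ v ≤ (1+3u)/2; Q(u,v) = (14-7v)/12 if (1+3u)/2 ≤ v ≤ 2. Then (3/4)·∫₀¹∫₀² Q(u,v)² dv du = 77/320. (This is the first summand in the computation of S(W^{B,C₀}_{•,•,•}; x) in the proof of Theorem 3.1.) -/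

import Mathlib

/-!
On each of the two strips `0 ≤ u ≤ 1/5` and `1/5 ≤ u ≤ 1` the four regions of definition of `Q`
are separated by breakpoints in `v` that are affine in `u`, and on each region `Q` is affine in
`v`. Hence the inner integral `∫₀² Q(u,v)² dv` is a cubic polynomial in `u` on each strip, and
integrating these two cubics over the strips gives the value.
-/

open Set intervalIntegral

theorem integral_cubic (a b c₀ c₁ c₂ c₃ : ℝ) :
    ∫ x in a..b, (c₀ + c₁ * x + c₂ * x ^ 2 + c₃ * x ^ 3) =
      c₀ * (b - a) + c₁ * (b ^ 2 - a ^ 2) / 2 + c₂ * (b ^ 3 - a ^ 3) / 3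
        + c₃ * (b ^ 4 - a ^ 4) / 4 := by
  rw [integral_add, integral_add, integral_add, integral_const_mul, integral_const_mul,
    integral_const_mul, integral_id, integral_pow, integral_pow, integral_const]
  · simp only [smul_eq_mul]
    push_cast
    ring
  all_goals exact Continuous.intervalIntegrable (by fun_prop) _ _

theorem integral_add_mul_sq (a b c d : ℝ) :
    ∫ x in a..b, (c + d * x) ^ 2 =
      c ^ 2 * (b - a) + c * d * (b ^ 2 - a ^ 2) + d ^ 2 * (b ^ 3 - a ^ 3) / 3 := by
  have hexpand : (fun x : ℝ => (c + d * x) ^ 2) =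
      fun x => c ^ 2 + 2 * c * d * x + d ^ 2 * x ^ 2 + 0 * x ^ 3 := by
    funext x; ring
  rw [hexpand, integral_cubic]
  ring

section Pieces

variable {f g₁ g₂ g₃ g₄ : ℝ → ℝ} {a₀ a₁ a₂ a₃ a₄ : ℝ}

theorem intervalIntegrable_of_eqOn_Icc (h₀₁ : a₀ ≤ a₁) (hg : Continuous g₁)
    (h : EqOn f g₁ (Icc a₀ a₁)) : IntervalIntegrable f MeasureTheory.volume a₀ a₁ :=
  (hg.continuousOn.congr (uIcc_of_le h₀₁ ▸ h)).intervalIntegrable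

theorem integral_eq_of_eqOn_Icc (h₀₁ : a₀ ≤ a₁) (h : EqOn f g₁ (Icc a₀ a₁)) :
    ∫ x in a₀..a₁, f x = ∫ x in a₀..a₁, g₁ x :=
  integral_congr (uIcc_of_le h₀₁ ▸ h)

theorem integral_eq_add_of_eqOn_Icc (h₀₁ : a₀ ≤ a₁) (h₁₂ : a₁ ≤ a₂)
    (hg₁ : Continuous g₁) (hg₂ : Continuous g₂)
    (h₁ : EqOn f g₁ (Icc a₀ a₁)) (h₂ : EqOn f g₂ (Icc a₁ a₂)) :
    ∫ x in a₀..a₂, f x = (∫ x in a₀..a₁, g₁ x) + ∫ x in a₁..a₂, g₂ x := by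
  rw [← integral_add_adjacent_intervals (intervalIntegrable_of_eqOn_Icc h₀₁ hg₁ h₁)
    (intervalIntegrable_of_eqOn_Icc h₁₂ hg₂ h₂),
    integral_eq_of_eqOn_Icc h₀₁ h₁, integral_eq_of_eqOn_Icc h₁₂ h₂]

theorem integral_eq_add_add_add_of_eqOn_Icc (h₀₁ : a₀ ≤ a₁) (h₁₂ : a₁ ≤ a₂) (h₂₃ : a₂ ≤ a₃)
    (h₃₄ : a₃ ≤ a₄) (hg₁ : Continuous g₁) (hg₂ : Continuous g₂) (hg₃ : Continuous g₃)
    (hg₄ : Continuous g₄) (h₁ : EqOn f g₁ (Icc a₀ a₁)) (h₂ : EqOn f g₂ (Icc a₁ a₂))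
    (h₃ : EqOn f g₃ (Icc a₂ a₃)) (h₄ : EqOn f g₄ (Icc a₃ a₄)) :
    ∫ x in a₀..a₄, f x = (∫ x in a₀..a₁, g₁ x) + (∫ x in a₁..a₂, g₂ x)
      + (∫ x in a₂..a₃, g₃ x) + ∫ x in a₃..a₄, g₄ x := by
  have i₁ := intervalIntegrable_of_eqOn_Icc h₀₁ hg₁ h₁
  have i₂ := intervalIntegrable_of_eqOn_Icc h₁₂ hg₂ h₂
  have i₃ := intervalIntegrable_of_eqOn_Icc h₂₃ hg₃ h₃
  have i₄ := intervalIntegrable_of_eqOn_Icc h₃₄ hg₄ h₄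
  rw [← integral_add_adjacent_intervals ((i₁.trans i₂).trans i₃) i₄,
    ← integral_add_adjacent_intervals (i₁.trans i₂) i₃, ← integral_add_adjacent_intervals i₁ i₂,
    integral_eq_of_eqOn_Icc h₀₁ h₁, integral_eq_of_eqOn_Icc h₁₂ h₂,
    integral_eq_of_eqOn_Icc h₂₃ h₃, integral_eq_of_eqOn_Icc h₃₄ h₄]

end Pieces

section InnerIntegral

variable {P : ℝ → ℝ} {u : ℝ}

theorem integral_sq_of_le_one_fifth (hu₀ : 0 ≤ u) (hu : u ≤ 1 / 5)
    (h₁ : ∀ v, 0 ≤ v → v ≤ 2 * u → P v = (1 - u + 2 * v) / 2)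
    (h₂ : ∀ v, 2 * u ≤ v → v ≤ (1 - u) / 2 → P v = (2 + 3 * v) / 4)
    (h₃ : ∀ v, (1 - u) / 2 ≤ v → v ≤ (1 + 3 * u) / 2 → P v = (4 - 2 * u - v) / 4)
    (h₄ : ∀ v, (1 + 3 * u) / 2 ≤ v → v ≤ 2 → P v = (14 - 7 * v) / 12) :
    ∫ v in (0 : ℝ)..2, P v ^ 2 = 5 / 8 - 11 / 8 * u ^ 2 + 1 / 12 * u ^ 3 := by
  rw [integral_eq_add_add_add_of_eqOn_Icc (by linarith) (by linarith) (by linarith)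
    (by linarith) (by fun_prop) (by fun_prop) (by fun_prop) (by fun_prop)
    (a₁ := 2 * u) (a₂ := (1 - u) / 2) (a₃ := (1 + 3 * u) / 2)
    (g₁ := fun v => ((1 - u) / 2 + 1 * v) ^ 2) (g₂ := fun v => (1 / 2 + 3 / 4 * v) ^ 2)
    (g₃ := fun v => ((4 - 2 * u) / 4 + -(1 / 4) * v) ^ 2)
    (g₄ := fun v => (7 / 6 + -(7 / 12) * v) ^ 2)
    (fun v hv => by simp only [h₁ v hv.1 hv.2]; ring)
    (fun v hv => by simp only [h₂ v hv.1 hv.2]; ring)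
    (fun v hv => by simp only [h₃ v hv.1 hv.2]; ring)
    (fun v hv => by simp only [h₄ v hv.1 hv.2]; ring)]
  simp only [integral_add_mul_sq]
  ring

theorem integral_sq_of_one_fifth_le (hu : 1 / 5 ≤ u) (hu₁ : u ≤ 1)
    (h₅ : ∀ v, 0 ≤ v → v ≤ (1 - u) / 2 → P v = (1 - u + 2 * v) / 2)
    (h₆ : ∀ v, (1 - u) / 2 ≤ v → v ≤ 2 * u → P v = 1 - u)
    (h₇ : ∀ v, 2 * u ≤ v → v ≤ (1 + 3 * u) / 2 → P v = (4 - 2 * u - v) / 4)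
    (h₈ : ∀ v, (1 + 3 * u) / 2 ≤ v → v ≤ 2 → P v = (14 - 7 * v) / 12) :
    ∫ v in (0 : ℝ)..2, P v ^ 2 = 59 / 96 + 5 / 32 * u - 69 / 32 * u ^ 2 + 133 / 96 * u ^ 3 := by
  rw [integral_eq_add_add_add_of_eqOn_Icc (by linarith) (by linarith) (by linarith)
    (by linarith) (by fun_prop) (by fun_prop) (by fun_prop) (by fun_prop)
    (a₁ := (1 - u) / 2) (a₂ := 2 * u) (a₃ := (1 + 3 * u) / 2)
    (g₁ := fun v => ((1 - u) / 2 + 1 * v) ^ 2) (g₂ := fun v => ((1 - u) + 0 * v) ^ 2)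
    (g₃ := fun v => ((4 - 2 * u) / 4 + -(1 / 4) * v) ^ 2)
    (g₄ := fun v => (7 / 6 + -(7 / 12) * v) ^ 2)
    (fun v hv => by simp only [h₅ v hv.1 hv.2]; ring)
    (fun v hv => by simp only [h₆ v hv.1 hv.2]; ring)
    (fun v hv => by simp only [h₇ v hv.1 hv.2]; ring)
    (fun v hv => by simp only [h₈ v hv.1 hv.2]; ring)]
  simp only [integral_add_mul_sq]
  ring

end InnerIntegral

/-- The first summand `(3/4)·∫₀¹∫₀² (P(u,v)·C₀)² dv du = 77/320` in the computation of
`S(W^{B,C₀}_{•,•,•};x)` in the proof of Theorem 3.1: for any function `Q` agreeing with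
the piecewise-linear intersection number `P(u,v)·C₀` on `[0,1] × [0,2]`, one has
`(3/4)·∫₀¹∫₀² Q(u,v)² dv du = 77/320`. -/
theorem stmt_14 (Q : ℝ → ℝ → ℝ)
    (h₁ : ∀ u v, 0 ≤ u → u ≤ 1/5 → 0 ≤ v → v ≤ 2*u →
      Q u v = (1 - u + 2*v)/2)
    (h₂ : ∀ u v, 0 ≤ u → u ≤ 1/5 → 2*u ≤ v → v ≤ (1-u)/2 →
      Q u v = (2 + 3*v)/4)
    (h₃ : ∀ u v, 0 ≤ u → u ≤ 1/5 → (1-u)/2 ≤ v → v ≤ (1+3*u)/2 →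
      Q u v = (4 - 2*u - v)/4)
    (h₄ : ∀ u v, 0 ≤ u → u ≤ 1/5 → (1+3*u)/2 ≤ v → v ≤ 2 →
      Q u v = (14 - 7*v)/12)
    (h₅ : ∀ u v, 1/5 ≤ u → u ≤ 1 → 0 ≤ v → v ≤ (1-u)/2 →
      Q u v = (1 - u + 2*v)/2)
    (h₆ : ∀ u v, 1/5 ≤ u → u ≤ 1 → (1-u)/2 ≤ v → v ≤ 2*u →
      Q u v = 1 - u)
    (h₇ : ∀ u v, 1/5 ≤ u → u ≤ 1 → 2*u ≤ v → v ≤ (1+3*u)/2 →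
      Q u v = (4 - 2*u - v)/4)
    (h₈ : ∀ u v, 1/5 ≤ u → u ≤ 1 → (1+3*u)/2 ≤ v → v ≤ 2 →
      Q u v = (14 - 7*v)/12) :
    (3/4 : ℝ) * (∫ u in (0:ℝ)..1, ∫ v in (0:ℝ)..2, (Q u v) ^ 2) = 77/320 := by
  rw [integral_eq_add_of_eqOn_Icc (by norm_num) (by norm_num) (by fun_prop) (by fun_prop)
    (a₁ := 1 / 5)
    (g₁ := fun u => 5 / 8 + 0 * u + -(11 / 8) * u ^ 2 + 1 / 12 * u ^ 3)
    (g₂ := fun u => 59 / 96 + 5 / 32 * u + -(69 / 32) * u ^ 2 + 133 / 96 * u ^ 3)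
    (fun u ⟨hu₀, hu⟩ => by
      rw [integral_sq_of_le_one_fifth hu₀ hu (h₁ u · hu₀ hu) (h₂ u · hu₀ hu) (h₃ u · hu₀ hu)
        (h₄ u · hu₀ hu)]
      ring)
    (fun u ⟨hu, hu₁⟩ => by
      rw [integral_sq_of_one_fifth_le hu hu₁ (h₅ u · hu hu₁) (h₆ u · hu hu₁) (h₇ u · hu hu₁)
        (h₈ u · hu hu₁)]
      ring),
    integral_cubic, integral_cubic]
  norm_num
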